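/- arXiv:2603.27149 — 2 statements merged into one kernel-verified Lean document; each statement's English description precedes it below -/
import Mathlib

section
/- Let U ⊆ V ⊆ R^d be submodules and ≺ a monomial order on R^d. Let G be a Gröbner basis of U and let H_V be a Gröbner basis of V such that G ⊆ H_V and every element of H_V ∖ U is supported on module monomials outside lm(U) (i.e., equals its normal form with respect to U). Then H := H_V ∖ U is a Gröbner basis of V relative to U. -/
attribute [local instance] Classical.propDecidable

noncomputable section

/-- Module monomial index: an exponent vector together with a component index. -/
abbrev ModMon (n d : ℕ) := (Fin n →₀ ℕ) × Fin d

/-- The free module `R^d` over `R = k[X_1, …, X_n]`. -/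
abbrev FreeMod (k : Type*) [Field k] (n d : ℕ) := Fin d → MvPolynomial (Fin n) k

variable {k : Type*} [Field k] {n d : ℕ}

/-- The module monomial `X^α e_i` as an element of `R^d`. -/
def mmVec (m : ModMon n d) : FreeMod k n d :=
  Pi.single m.2 (MvPolynomial.monomial m.1 (1 : k))

/-- The support of `f ∈ R^d` as a finite set of module monomials. -/
def suppF (f : FreeMod k n d) : Finset (ModMon n d) :=
  (Finset.univ : Finset (Fin d)).biUnion fun i =>
    ((f i).support.image fun a => ((a, i) : ModMon n d))

/-- A monomial order on `R^d`: a well-founded total order on module monomials such that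
`e_i ⪯ X^α e_i` and which is compatible with multiplication by monomials. -/
structure ModMonOrder (n d : ℕ) where
  toOrd : LinearOrder (ModMon n d)
  wf : WellFounded toOrd.lt
  base_le : ∀ (i : Fin d) (a : Fin n →₀ ℕ), toOrd.le (0, i) (a, i)
  add_le : ∀ (a b c : Fin n →₀ ℕ) (i j : Fin d),
    toOrd.le (b, i) (c, j) → toOrd.le (a + b, i) (a + c, j)

namespace ModMonOrder

variable (ord : ModMonOrder n d)

/-- The leading monomial of `f` (`⊥` if `f = 0`). -/
def lmo (f : FreeMod k n d) : WithBot (ModMon n d) :=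
  letI := ord.toOrd
  (suppF f).max

/-- The order on leading monomials, extended to `WithBot` (with `⊥` smallest). -/
def leB (x y : WithBot (ModMon n d)) : Prop :=
  WithBot.recBotCoe True
    (fun a => WithBot.recBotCoe False (fun b => ord.toOrd.le a b) y) x

/-- The leading coefficient of `f` (`0` if `f = 0`). -/
def lc (f : FreeMod k n d) : k :=
  WithBot.recBotCoe 0 (fun m => (f m.2).coeff m.1) (ord.lmo f)

/-- The leading monomial of `f`, as an element of `R^d` (`0` if `f = 0`). -/
def lmVec (f : FreeMod k n d) : FreeMod k n d :=
  WithBot.recBotCoe 0 (fun m => mmVec m) (ord.lmo f)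

/-- `lm(W)`: the submodule generated by the leading monomials of nonzero elements of `W`. -/
def lmSub (W : Submodule (MvPolynomial (Fin n) k) (FreeMod k n d)) :
    Submodule (MvPolynomial (Fin n) k) (FreeMod k n d) :=
  Submodule.span (MvPolynomial (Fin n) k) {v | ∃ f ∈ W, f ≠ 0 ∧ v = ord.lmVec f}

end ModMonOrder

/-- Divisibility in `R^d`: `u` divides `v` iff `v = p • u` for some polynomial `p`. -/
def dvdV (u v : FreeMod k n d) : Prop := ∃ p : MvPolynomial (Fin n) k, v = p • u

/-- `G` is a Gröbner basis of the submodule `W ⊆ R^d`. -/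
def IsGB (ord : ModMonOrder n d) (W : Submodule (MvPolynomial (Fin n) k) (FreeMod k n d))
    (G : Finset (FreeMod k n d)) : Prop :=
  Submodule.span (MvPolynomial (Fin n) k) (G : Set (FreeMod k n d)) = W ∧
  Submodule.span (MvPolynomial (Fin n) k) (ord.lmVec '' (G : Set (FreeMod k n d))) = ord.lmSub W

/-- `G` is the reduced Gröbner basis of `W ⊆ R^d`. -/
def IsRedGB (ord : ModMonOrder n d) (W : Submodule (MvPolynomial (Fin n) k) (FreeMod k n d))
    (G : Finset (FreeMod k n d)) : Prop :=
  IsGB ord W G ∧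
  (∀ g ∈ G, ∀ g' ∈ G, g ≠ g' → ¬ dvdV (ord.lmVec g) (ord.lmVec g')) ∧
  ∀ g ∈ G, ord.lc g = 1 ∧ ∀ m ∈ suppF (g - ord.lmVec g), mmVec m ∉ ord.lmSub W

/-- `p` is a normal form of `f` modulo `U`: `f - p ∈ U` and `p` is supported on
module monomials outside `lm(U)`. -/
def IsNF (ord : ModMonOrder n d) (U : Submodule (MvPolynomial (Fin n) k) (FreeMod k n d))
    (f p : FreeMod k n d) : Prop :=
  f - p ∈ U ∧ ∀ m ∈ suppF p, mmVec m ∉ ord.lmSub U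

/-- `H` is a Gröbner basis of `V` relative to `U`. -/
def IsRelGB (ord : ModMonOrder n d) (U V : Submodule (MvPolynomial (Fin n) k) (FreeMod k n d))
    (H : Finset (FreeMod k n d)) : Prop :=
  (H : Set (FreeMod k n d)) ⊆ (V : Set (FreeMod k n d)) \ (U : Set (FreeMod k n d)) ∧
  (∀ h ∈ H, ∀ m ∈ suppF h, mmVec m ∉ ord.lmSub U) ∧
  Submodule.span (MvPolynomial (Fin n) k) (ord.lmVec '' (H : Set (FreeMod k n d))) ⊔ ord.lmSub U
    = ord.lmSub V

/-- `H` is a minimal Gröbner basis of `V` relative to `U`. -/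
def IsMinRelGB (ord : ModMonOrder n d) (U V : Submodule (MvPolynomial (Fin n) k) (FreeMod k n d))
    (H : Finset (FreeMod k n d)) : Prop :=
  IsRelGB ord U V H ∧
  ∀ h ∈ H, ∀ h' ∈ H, h ≠ h' → ¬ dvdV (ord.lmVec h) (ord.lmVec h')

/-- `H` is the reduced Gröbner basis of `V` relative to `U`. -/
def IsRedRelGB (ord : ModMonOrder n d) (U V : Submodule (MvPolynomial (Fin n) k) (FreeMod k n d))
    (H : Finset (FreeMod k n d)) : Prop :=
  IsMinRelGB ord U V H ∧
  ∀ h ∈ H, ord.lc h = 1 ∧ ∀ m ∈ suppF (h - ord.lmVec h), mmVec m ∉ ord.lmSub V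

end

namespace ModMonOrder

variable {k : Type*} [Field k] {n d : ℕ} (ord : ModMonOrder n d)

@[simp]
theorem lmVec_zero : ord.lmVec (0 : FreeMod k n d) = 0 := by
  have hsupp : suppF (0 : FreeMod k n d) = ∅ := by
    ext m
    simp [suppF]
  simp [lmVec, lmo, hsupp]

theorem lmVec_mem_lmSub {W : Submodule (MvPolynomial (Fin n) k) (FreeMod k n d)}
    {f : FreeMod k n d} (hf : f ∈ W) : ord.lmVec f ∈ ord.lmSub W := by
  by_cases hf0 : f = 0
  · rw [hf0, lmVec_zero]
    exact zero_mem _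
  · exact Submodule.subset_span ⟨f, hf, hf0, rfl⟩

theorem lmSub_mono {U V : Submodule (MvPolynomial (Fin n) k) (FreeMod k n d)} (hUV : U ≤ V) :
    ord.lmSub U ≤ ord.lmSub V :=
  Submodule.span_mono fun _ ⟨f, hf, hf0, hv⟩ => ⟨f, hUV hf, hf0, hv⟩

end ModMonOrder

namespace IsGB

variable {k : Type*} [Field k] {n d : ℕ} {ord : ModMonOrder n d}
  {U V : Submodule (MvPolynomial (Fin n) k) (FreeMod k n d)} {HV : Finset (FreeMod k n d)}

theorem mem {f : FreeMod k n d} (hHV : IsGB ord V HV) (hf : f ∈ HV) : f ∈ V :=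
  hHV.1 ▸ Submodule.subset_span hf

theorem span_lmVec_filter_notMem_sup_lmSub (hHV : IsGB ord V HV) (hUV : U ≤ V) :
    Submodule.span (MvPolynomial (Fin n) k)
        (ord.lmVec '' ((HV.filter fun f => f ∉ U : Finset (FreeMod k n d)) : Set (FreeMod k n d)))
      ⊔ ord.lmSub U = ord.lmSub V := by
  apply le_antisymm
  · refine sup_le ?_ (ord.lmSub_mono hUV)
    rw [← hHV.2]
    exact Submodule.span_mono (Set.image_mono (Finset.coe_subset.2 (Finset.filter_subset _ _)))
  · rw [← hHV.2, Submodule.span_le]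
    rintro _ ⟨f, hf, rfl⟩
    by_cases hfU : f ∈ U
    · exact Submodule.mem_sup_right (ord.lmVec_mem_lmSub hfU)
    · exact Submodule.mem_sup_left (Submodule.subset_span
        ⟨f, Finset.mem_coe.2 (Finset.mem_filter.2 ⟨hf, hfU⟩), rfl⟩)

end IsGB

theorem relative_groebner_basis_from_buchberger_general {k : Type*} [Field k] {n d : ℕ}
    (ord : ModMonOrder n d)
    (U V : Submodule (MvPolynomial (Fin n) k) (FreeMod k n d))
    (hUV : U ≤ V)
    (HV : Finset (FreeMod k n d))
    (hHV : IsGB ord V HV)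
    (hsupp : ∀ f ∈ HV, f ∉ U → ∀ m ∈ suppF f, mmVec m ∉ ord.lmSub U) :
    IsRelGB ord U V (HV.filter fun f => f ∉ U) := by
  refine ⟨fun f hf => ?_, fun f hf => ?_, hHV.span_lmVec_filter_notMem_sup_lmSub hUV⟩
  all_goals obtain ⟨hfHV, hfU⟩ := Finset.mem_filter.1 hf
  · exact ⟨hHV.mem hfHV, hfU⟩
  · exact hsupp f hfHV hfU

/-- If `G` is a Gröbner basis of `U`, `H_V ⊇ G` is a Gröbner basis of `V` and every element
of `H_V ∖ U` is supported on module monomials outside `lm(U)`, then `H := H_V ∖ U` is a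
Gröbner basis of `V` relative to `U`. -/
theorem relative_groebner_basis_from_buchberger {k : Type*} [Field k] {n d : ℕ}
    (ord : ModMonOrder n d)
    (U V : Submodule (MvPolynomial (Fin n) k) (FreeMod k n d))
    (hUV : U ≤ V)
    (G HV : Finset (FreeMod k n d))
    (hG : IsGB ord U G)
    (hHV : IsGB ord V HV)
    (hGsub : G ⊆ HV)
    (hsupp : ∀ f ∈ HV, f ∉ U → ∀ m ∈ suppF f, mmVec m ∉ ord.lmSub U) :
    IsRelGB ord U V (HV.filter fun f => f ∉ U) :=
  relative_groebner_basis_from_buchberger_general ord U V hUV HV hHV hsupp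
end

section
/- Let U ⊆ V ⊆ R^d be monomial submodules (i.e., each is generated by module monomials) and ≺ a monomial order on R^d. Then the reduced Gröbner basis H of V relative to U is a minimal generating set of the quotient module V/U, i.e., the images {h + U : h ∈ H} generate V/U and no proper subset of these images generates V/U. -/
attribute [local instance] Classical.propDecidable

/-!
For a monomial submodule `W`, every module monomial in the support of an element of `W` is
divisible by a generator and hence lies in `W`; so `lm(W) = W`. Each `h ∈ H` lies in `V`, so its
whole support lies in `V = lm(V)`, and reducedness forces `h = lm(h)`: `H` consists of module
monomials and the relative Gröbner condition reads `⟨H⟩ + U = V`, so the images of `H` generate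
`V/U`. If the image of `h` were generated by the other images, the monomial `h` would lie in the
monomial submodule generated by `H ∖ {h}` and `U`, hence be divisible by one of these generators:
a generator of `U` would put `h` in `U`, another element of `H` would contradict minimality.
-/

section MonomialSubmodules

variable {k : Type*} [Field k] {n d : ℕ}

theorem mem_suppF_iff {f : FreeMod k n d} {m : ModMon n d} :
    m ∈ suppF f ↔ m.1 ∈ (f m.2).support := by
  simp only [suppF, Finset.mem_biUnion, Finset.mem_univ, true_and, Finset.mem_image]
  constructor
  · rintro ⟨i, a, ha, rfl⟩
    exact ha
  · exact fun hm => ⟨m.2, m.1, hm, rfl⟩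

theorem suppF_eq_empty {f : FreeMod k n d} : suppF f = ∅ ↔ f = 0 := by
  refine ⟨fun hf => ?_, fun hf => ?_⟩
  · funext i
    ext a
    by_contra ha
    have : (a, i) ∈ suppF f := mem_suppF_iff.2 (MvPolynomial.mem_support_iff.2 ha)
    simp [hf] at this
  · ext m
    simp [mem_suppF_iff, hf]

theorem suppF_add_subset (f g : FreeMod k n d) : suppF (f + g) ⊆ suppF f ∪ suppF g := by
  intro m hm
  simpa only [Finset.mem_union, mem_suppF_iff] using
    MvPolynomial.support_add (mem_suppF_iff.1 hm)

theorem suppF_sub_subset (f g : FreeMod k n d) : suppF (f - g) ⊆ suppF f ∪ suppF g := by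
  intro m hm
  simpa only [Finset.mem_union, mem_suppF_iff] using
    MvPolynomial.support_sub _ _ _ (mem_suppF_iff.1 hm)

theorem exists_of_mem_suppF_smul {p : MvPolynomial (Fin n) k} {f : FreeMod k n d}
    {m : ModMon n d} (hm : m ∈ suppF (p • f)) :
    ∃ a b : Fin n →₀ ℕ, (b, m.2) ∈ suppF f ∧ m.1 = a + b := by
  obtain ⟨a, -, b, hb, hab⟩ :=
    Finset.mem_add.1 (MvPolynomial.support_mul _ _ (mem_suppF_iff.1 hm))
  exact ⟨a, b, mem_suppF_iff.2 hb, hab.symm⟩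

theorem suppF_mmVec (m : ModMon n d) : suppF (mmVec m : FreeMod k n d) = {m} := by
  ext m'
  rcases eq_or_ne m'.2 m.2 with h2 | h2
  · simp [mem_suppF_iff, mmVec, h2, MvPolynomial.support_monomial, Prod.ext_iff, and_comm]
  · simp [mem_suppF_iff, mmVec, h2, Prod.ext_iff]

theorem mmVec_ne_zero (m : ModMon n d) : (mmVec m : FreeMod k n d) ≠ 0 := by
  intro h
  have h' := suppF_mmVec (k := k) m
  rw [h, suppF_eq_empty.2 rfl] at h'
  exact Finset.singleton_ne_empty m h'.symm

theorem monomial_smul_mmVec (a : Fin n →₀ ℕ) (m : ModMon n d) :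
    MvPolynomial.monomial a (1 : k) • (mmVec m : FreeMod k n d) = mmVec (a + m.1, m.2) := by
  simp [mmVec, ← Pi.single_smul, MvPolynomial.monomial_mul]

theorem exists_dvdV_mmVec_of_mem_suppF {G : Set (FreeMod k n d)} (hG : G ⊆ Set.range mmVec)
    {f : FreeMod k n d} (hf : f ∈ Submodule.span (MvPolynomial (Fin n) k) G)
    {m : ModMon n d} (hm : m ∈ suppF f) : ∃ g ∈ G, dvdV g (mmVec m) := by
  induction hf using Submodule.span_induction generalizing m with
  | mem g hg =>
    obtain ⟨s, rfl⟩ := hG hg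
    rw [suppF_mmVec, Finset.mem_singleton] at hm
    exact ⟨mmVec s, hg, 1, by rw [hm, one_smul]⟩
  | zero => simp [suppF_eq_empty.2 rfl] at hm
  | add x y _ _ hx hy =>
    rcases Finset.mem_union.1 (suppF_add_subset x y hm) with hm | hm
    exacts [hx hm, hy hm]
  | smul p x _ hx =>
    obtain ⟨a, b, hb, hab⟩ := exists_of_mem_suppF_smul hm
    obtain ⟨g, hg, q, hq⟩ := hx hb
    refine ⟨g, hg, MvPolynomial.monomial a 1 * q, ?_⟩
    rw [mul_smul, ← hq, monomial_smul_mmVec, ← hab]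

theorem mmVec_mem_span_of_mem_suppF {G : Set (FreeMod k n d)} (hG : G ⊆ Set.range mmVec)
    {f : FreeMod k n d} (hf : f ∈ Submodule.span (MvPolynomial (Fin n) k) G)
    {m : ModMon n d} (hm : m ∈ suppF f) :
    mmVec m ∈ Submodule.span (MvPolynomial (Fin n) k) G := by
  obtain ⟨g, hg, p, hp⟩ := exists_dvdV_mmVec_of_mem_suppF hG hf hm
  exact hp ▸ Submodule.smul_mem _ p (Submodule.subset_span hg)

def IsMonomialSubmodule (W : Submodule (MvPolynomial (Fin n) k) (FreeMod k n d)) : Prop :=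
  ∃ S : Set (ModMon n d), W = Submodule.span (MvPolynomial (Fin n) k) (mmVec '' S)

theorem IsMonomialSubmodule.mmVec_mem_of_mem_suppF
    {W : Submodule (MvPolynomial (Fin n) k) (FreeMod k n d)} (hW : IsMonomialSubmodule W)
    {f : FreeMod k n d} (hf : f ∈ W) {m : ModMon n d} (hm : m ∈ suppF f) : mmVec m ∈ W := by
  obtain ⟨S, rfl⟩ := hW
  exact mmVec_mem_span_of_mem_suppF (Set.image_subset_range _ _) hf hm

end MonomialSubmodules

namespace ModMonOrder

variable {k : Type*} [Field k] {n d : ℕ} (ord : ModMonOrder n d)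

theorem exists_mem_suppF_lmVec_eq {f : FreeMod k n d} (hf : f ≠ 0) :
    ∃ m ∈ suppF f, ord.lmVec f = mmVec m := by
  let := ord.toOrd
  obtain ⟨m, hm⟩ :=
    Finset.max_of_nonempty (Finset.nonempty_iff_ne_empty.2 (suppF_eq_empty.not.2 hf))
  have hlmo : ord.lmo f = m := hm
  refine ⟨m, Finset.mem_of_max hm, ?_⟩
  rw [lmVec, hlmo]
  rfl

theorem lmVec_mmVec (m : ModMon n d) : ord.lmVec (mmVec m : FreeMod k n d) = mmVec m := by
  let := ord.toOrd
  have hlmo : ord.lmo (mmVec m : FreeMod k n d) = m := by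
    rw [lmo, suppF_mmVec, Finset.max_singleton]
  rw [lmVec, hlmo]
  rfl

theorem lmSub_eq_self {W : Submodule (MvPolynomial (Fin n) k) (FreeMod k n d)}
    (hW : IsMonomialSubmodule W) : ord.lmSub W = W := by
  refine le_antisymm (Submodule.span_le.2 ?_) ?_
  · rintro v ⟨f, hfW, hf0, rfl⟩
    obtain ⟨m, hm, hlm⟩ := ord.exists_mem_suppF_lmVec_eq hf0
    exact hlm ▸ hW.mmVec_mem_of_mem_suppF hfW hm
  · obtain ⟨S, hS⟩ := hW
    conv_lhs => rw [hS]
    refine Submodule.span_le.2 ?_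
    rintro v ⟨s, hs, rfl⟩
    exact Submodule.subset_span ⟨mmVec s, hS ▸ Submodule.subset_span ⟨s, hs, rfl⟩,
      mmVec_ne_zero s, (ord.lmVec_mmVec s).symm⟩

end ModMonOrder

namespace IsRedRelGB

variable {k : Type*} [Field k] {n d : ℕ} {ord : ModMonOrder n d}
  {U V : Submodule (MvPolynomial (Fin n) k) (FreeMod k n d)} {H : Finset (FreeMod k n d)}

theorem exists_eq_mmVec (hV : IsMonomialSubmodule V) (hH : IsRedRelGB ord U V H)
    {h : FreeMod k n d} (hh : h ∈ H) : ∃ m, h = mmVec m := by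
  obtain ⟨hhV, hhU⟩ := hH.1.1.1 hh
  have hh0 : h ≠ 0 := by
    rintro rfl
    exact hhU U.zero_mem
  obtain ⟨m, hm, hlm⟩ := ord.exists_mem_suppF_lmVec_eq hh0
  refine ⟨m, sub_eq_zero.1 (suppF_eq_empty.1 (Finset.eq_empty_of_forall_notMem
    fun m' hm' => ?_))⟩
  have hm'h : m' ∈ suppF h := by
    rcases Finset.mem_union.1 (suppF_sub_subset _ _ hm') with hm' | hm'
    · exact hm'
    · rw [suppF_mmVec, Finset.mem_singleton] at hm'
      exact hm' ▸ hm
  refine (hH.2 h hh).2 m' (hlm ▸ hm') ?_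
  rw [ord.lmSub_eq_self hV]
  exact hV.mmVec_mem_of_mem_suppF hhV hm'h

theorem lmVec_eq_self (hV : IsMonomialSubmodule V) (hH : IsRedRelGB ord U V H)
    {h : FreeMod k n d} (hh : h ∈ H) : ord.lmVec h = h := by
  obtain ⟨m, rfl⟩ := hH.exists_eq_mmVec hV hh
  exact ord.lmVec_mmVec m

theorem span_sup_eq (hU : IsMonomialSubmodule U) (hV : IsMonomialSubmodule V)
    (hH : IsRedRelGB ord U V H) :
    Submodule.span (MvPolynomial (Fin n) k) (H : Set (FreeMod k n d)) ⊔ U = V := by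
  have hlm := hH.1.1.2.2
  rwa [Set.image_congr fun h hh => hH.lmVec_eq_self hV hh, Set.image_id',
    ord.lmSub_eq_self hU, ord.lmSub_eq_self hV] at hlm

theorem notMem_span_sdiff_sup (hU : IsMonomialSubmodule U) (hV : IsMonomialSubmodule V)
    (hH : IsRedRelGB ord U V H) {h : FreeMod k n d} (hh : h ∈ H) :
    h ∉ Submodule.span (MvPolynomial (Fin n) k) ((H : Set (FreeMod k n d)) \ {h}) ⊔ U := by
  intro hmem
  obtain ⟨SU, hSU⟩ := hU
  obtain ⟨m, rfl⟩ := hH.exists_eq_mmVec hV hh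
  rw [hSU, ← Submodule.span_union] at hmem
  have hG : (H : Set (FreeMod k n d)) \ {mmVec m} ∪ mmVec '' SU ⊆ Set.range mmVec :=
    Set.union_subset (fun g hg => (hH.exists_eq_mmVec hV hg.1).imp fun _ => Eq.symm)
      (Set.image_subset_range _ _)
  obtain ⟨g, hg | hg, p, hp⟩ :=
    exists_dvdV_mmVec_of_mem_suppF hG hmem (m := m) (by simp [suppF_mmVec])
  · refine hH.1.2 g hg.1 (mmVec m) hh hg.2 ?_
    rw [hH.lmVec_eq_self hV hg.1, hH.lmVec_eq_self hV hh]
    exact ⟨p, hp⟩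
  · refine (hH.1.1.1 hh).2 ?_
    rw [hp, hSU]
    exact Submodule.smul_mem _ p (Submodule.subset_span hg)

end IsRedRelGB

namespace Submodule

variable {R M : Type*} [Ring R] [AddCommGroup M] [Module R M] {U V : Submodule R M} {H : Set M}

theorem span_mkQ_image_eq_map_of_span_sup_eq (hHU : span R H ⊔ U = V) :
    span R (U.mkQ '' H) = V.map U.mkQ := by
  rw [← hHU, map_sup, map_span, mkQ_map_self, sup_bot_eq]

theorem span_ne_span_mkQ_image_of_ssubset (hH : ∀ h ∈ H, h ∉ span R (H \ {h}) ⊔ U)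
    {T : Set (M ⧸ U)} (hT : T ⊂ U.mkQ '' H) : span R T ≠ span R (U.mkQ '' H) := by
  intro hspan
  obtain ⟨_, ⟨h, hh, rfl⟩, hhT⟩ := Set.exists_of_ssubset hT
  have hTsub : T ⊆ U.mkQ '' (H \ {h}) := by
    intro t ht
    obtain ⟨h', hh', rfl⟩ := hT.subset ht
    exact ⟨h', ⟨hh', fun hh'h => hhT (Set.mem_singleton_iff.1 hh'h ▸ ht)⟩, rfl⟩
  have hmap : U.mkQ h ∈ (span R (H \ {h})).map U.mkQ := by
    rw [map_span]
    exact span_mono hTsub (hspan ▸ subset_span ⟨h, hh, rfl⟩)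
  apply hH h hh
  rwa [sup_comm, ← comap_map_mkQ]

end Submodule

theorem reduced_relative_groebner_basis_minimal_for_monomial_modules_general
    {k : Type*} [Field k] {n d : ℕ}
    (ord : ModMonOrder n d)
    (U V : Submodule (MvPolynomial (Fin n) k) (FreeMod k n d))
    (hUmon : ∃ S : Set (ModMon n d),
      U = Submodule.span (MvPolynomial (Fin n) k) (mmVec '' S))
    (hVmon : ∃ S : Set (ModMon n d),
      V = Submodule.span (MvPolynomial (Fin n) k) (mmVec '' S))
    (H : Finset (FreeMod k n d))
    (hH : IsRedRelGB ord U V H) :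
    Submodule.span (MvPolynomial (Fin n) k) (U.mkQ '' (H : Set (FreeMod k n d)))
        = V.map U.mkQ ∧
      ∀ T ⊂ U.mkQ '' (H : Set (FreeMod k n d)),
        Submodule.span (MvPolynomial (Fin n) k) T ≠ V.map U.mkQ := by
  have hspan := Submodule.span_mkQ_image_eq_map_of_span_sup_eq (hH.span_sup_eq hUmon hVmon)
  exact ⟨hspan, fun T hT => hspan ▸ Submodule.span_ne_span_mkQ_image_of_ssubset
    (fun h hh => hH.notMem_span_sdiff_sup hUmon hVmon hh) hT⟩

/-- If `U ⊆ V ⊆ R^d` are monomial submodules, then the reduced Gröbner basis `H` of `V`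
relative to `U` is a minimal generating set of `V/U`: the images `{h + U : h ∈ H}` generate
`V/U` and no proper subset of these images generates `V/U`. -/
theorem reduced_relative_groebner_basis_minimal_for_monomial_modules
    {k : Type*} [Field k] {n d : ℕ}
    (ord : ModMonOrder n d)
    (U V : Submodule (MvPolynomial (Fin n) k) (FreeMod k n d))
    (hUV : U ≤ V)
    (hUmon : ∃ S : Set (ModMon n d),
      U = Submodule.span (MvPolynomial (Fin n) k) (mmVec '' S))
    (hVmon : ∃ S : Set (ModMon n d),
      V = Submodule.span (MvPolynomial (Fin n) k) (mmVec '' S))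
    (H : Finset (FreeMod k n d))
    (hH : IsRedRelGB ord U V H) :
    Submodule.span (MvPolynomial (Fin n) k) (U.mkQ '' (H : Set (FreeMod k n d)))
        = V.map U.mkQ ∧
      ∀ T ⊂ U.mkQ '' (H : Set (FreeMod k n d)),
        Submodule.span (MvPolynomial (Fin n) k) T ≠ V.map U.mkQ :=
  reduced_relative_groebner_basis_minimal_for_monomial_modules_general ord U V hUmon hVmon H hH
end
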